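/- arXiv:2212.05644 — 7 statements merged into one kernel-verified Lean document; each statement's English description precedes it below -/
import Mathlib

section
/- The first two normal-mode frequencies are in near 2:1 resonance: ω_2 = 2 ω_1 cos(π/(2(N+1))), and consequently 0 < 2ω_1 − ω_2 ≤ π³/(4(N+1)³) for every N ≥ 1. -/
/-- The first two normal-mode frequencies `ω_k = 2 sin(kπ/(2(N+1)))` are in near
2:1 resonance: `ω_2 = 2 ω_1 cos(π/(2(N+1)))`, and consequently
`0 < 2ω_1 − ω_2 ≤ π³/(4(N+1)³)` for every `N ≥ 1`. -/
theorem near_two_one_resonance (N : ℕ) (hN : 1 ≤ N) :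
    let ω : ℕ → ℝ := fun k => 2 * Real.sin ((k : ℝ) * Real.pi / (2 * ((N : ℝ) + 1)))
    ω 2 = 2 * ω 1 * Real.cos (Real.pi / (2 * ((N : ℝ) + 1))) ∧
      0 < 2 * ω 1 - ω 2 ∧
      2 * ω 1 - ω 2 ≤ Real.pi ^ 3 / (4 * ((N : ℝ) + 1) ^ 3) := by
  intro ω
  have hNpos : (0 : ℝ) < (N : ℝ) + 1 := by positivity
  set θ : ℝ := Real.pi / (2 * ((N : ℝ) + 1)) with hθ
  have hθpos : 0 < θ := by positivity
  have hθle : θ ≤ Real.pi / 2 := by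
    rw [hθ, div_le_div_iff₀ (by positivity) (by norm_num)]
    nlinarith [Real.pi_pos]
  have h1 : ω 1 = 2 * Real.sin θ := by simp [ω, hθ]
  have h2 : ω 2 = 2 * Real.sin (2 * θ) := by
    simp only [ω, hθ, Nat.cast_ofNat]
    ring_nf
  have hsin2 : Real.sin (2 * θ) = 2 * Real.sin θ * Real.cos θ := Real.sin_two_mul θ
  have hsinpos : 0 < Real.sin θ :=
    Real.sin_pos_of_pos_of_lt_pi hθpos (lt_of_le_of_lt hθle (by linarith [Real.pi_pos]))
  have hcosle : Real.cos θ ≤ 1 := Real.cos_le_one θ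
  have hcoslt : Real.cos θ < 1 := by
    have h := Real.sin_sq_add_cos_sq θ
    nlinarith
  have hdiff : 2 * ω 1 - ω 2 = 4 * Real.sin θ * (1 - Real.cos θ) := by
    rw [h1, h2, hsin2]; ring
  refine ⟨by rw [h1, h2, hsin2]; ring, ?_, ?_⟩
  · rw [hdiff]; nlinarith
  · have hsinle : Real.sin θ ≤ θ := Real.sin_le hθpos.le
    have hcosge : 1 - θ ^ 2 / 2 ≤ Real.cos θ := Real.one_sub_sq_div_two_le_cos
    have hle : 2 * ω 1 - ω 2 ≤ 2 * θ ^ 3 := by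
      rw [hdiff]; nlinarith
    have heq : 2 * θ ^ 3 = Real.pi ^ 3 / (4 * ((N : ℝ) + 1) ^ 3) := by
      rw [hθ]; field_simp; ring
    linarith
end

section
/- The quantity B̃|q₁(T)|² + Ã|q₂(T)|² is a constant of motion of the envelope system: for every solution (q₁, q₂) of i q₁′ = q₁ + Ã conj(q₁) q₂, i q₂′ = q₂ + B̃ q₁², the function T ↦ B̃|q₁(T)|² + Ã|q₂(T)|² has zero derivative, hence is constant. -/
/-!
Writing the system as `i q' = g`, the derivative of `‖q‖²` is `2 Im(conj q · g)`. The linear parts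
contribute nothing, and the nonlinear parts give `2Ã Im(conj q₁² q₂)` for `|q₁|²` and
`2B̃ Im(conj q₂ q₁²) = -2B̃ Im(conj q₁² q₂)` for `|q₂|²`, which cancel in `B̃|q₁|² + Ã|q₂|²`.
-/

open ComplexConjugate

theorem HasDerivAt.norm_sq_of_I_mul_eq {f : ℝ → ℂ} {f' g : ℂ} {t : ℝ}
    (hf : HasDerivAt f f' t) (hg : Complex.I * f' = g) :
    HasDerivAt (‖f ·‖ ^ 2) (2 * (conj (f t) * g).im) t := by
  convert hf.norm_sq using 2
  rw [Complex.inner, ← hg]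
  simp only [Complex.mul_re, Complex.mul_im, Complex.I_re, Complex.I_im, Complex.conj_re,
    Complex.conj_im]
  ring

theorem Complex.im_conj_mul_self_add (z w : ℂ) : (conj z * (z + w)).im = (conj z * w).im := by
  rw [mul_add, Complex.add_im, Complex.conj_mul', ← Complex.ofReal_pow, Complex.ofReal_im,
    zero_add]

theorem Complex.im_conj_mul_sq (z w : ℂ) : (conj w * z ^ 2).im = -(conj z ^ 2 * w).im := by
  rw [← Complex.conj_im, map_mul, map_pow, Complex.conj_conj, mul_comm]

/-- `B̃|q₁|² + Ã|q₂|²` is a constant of motion of the envelope system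
`i q₁′ = q₁ + Ã conj(q₁) q₂`, `i q₂′ = q₂ + B̃ q₁²`. -/
theorem envelope_constant_of_motion
    (A B : ℝ) (q₁ q₂ : ℝ → ℂ)
    (hq₁ : Differentiable ℝ q₁) (hq₂ : Differentiable ℝ q₂)
    (heq₁ : ∀ T : ℝ, Complex.I * deriv q₁ T =
      q₁ T + (A : ℂ) * (starRingEnd ℂ) (q₁ T) * q₂ T)
    (heq₂ : ∀ T : ℝ, Complex.I * deriv q₂ T = q₂ T + (B : ℂ) * (q₁ T) ^ 2) :
    let E : ℝ → ℝ := fun T => B * ‖q₁ T‖ ^ 2 + A * ‖q₂ T‖ ^ 2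
    (∀ T : ℝ, deriv E T = 0) ∧ ∀ T S : ℝ, E T = E S := by
  intro E
  have hE : ∀ T, HasDerivAt E 0 T := by
    intro T
    have h₁ := (hq₁ T).hasDerivAt.norm_sq_of_I_mul_eq (heq₁ T)
    have h₂ := (hq₂ T).hasDerivAt.norm_sq_of_I_mul_eq (heq₂ T)
    refine ((h₁.const_mul B).add (h₂.const_mul A)).congr_deriv ?_
    rw [Complex.im_conj_mul_self_add, Complex.im_conj_mul_self_add,
      show conj (q₁ T) * (A * conj (q₁ T) * q₂ T) = A * (conj (q₁ T) ^ 2 * q₂ T) by ring,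
      mul_left_comm (conj (q₂ T)), Complex.im_ofReal_mul, Complex.im_ofReal_mul,
      Complex.im_conj_mul_sq]
    ring
  exact ⟨fun T => (hE T).deriv, is_const_of_deriv_eq_zero (fun T => (hE T).differentiableAt)
    fun T => (hE T).deriv⟩
end

section
/- Along every solution of the envelope system with Ã + B̃ ≠ 0, the quantities P(T) = |q₁(T)|² + |q₂(T)|² and Δ(T) = |q₁(T)|² − |q₂(T)|² satisfy P′(T) = ((Ã − B̃)/(Ã + B̃)) · Δ′(T) for all T; equivalently, C = P(T) − ((Ã − B̃)/(Ã + B̃)) Δ(T) is a constant of motion. -/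
/-!
Writing the equations as `q' = -i (q + r)`, the rate of change of `|q|²` is `2 Im(q̄ r)`.
With `J = Im(q̄₁² q₂)` this gives `|q₁|²' = 2ÃJ` and `|q₂|²' = -2B̃J`, so `P' = 2(Ã - B̃)J` and
`Δ' = 2(Ã + B̃)J` are proportional.
-/

open ComplexConjugate

theorem HasDerivAt.norm_sq_of_I_mul_eq_s8 {q : ℝ → ℂ} {q' r : ℂ} {t : ℝ} (hq : HasDerivAt q q' t)
    (h : Complex.I * q' = q t + r) :
    HasDerivAt (fun s => ‖q s‖ ^ 2) (2 * (conj (q t) * r).im) t := by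
  have hq' : q' = -Complex.I * (q t + r) := by
    linear_combination (-Complex.I) * h + q' * Complex.I_sq
  convert hq.norm_sq using 1
  rw [Complex.inner, hq']
  simp only [Complex.mul_re, Complex.mul_im, Complex.add_re, Complex.add_im, Complex.neg_re,
    Complex.neg_im, Complex.I_re, Complex.I_im, Complex.conj_re, Complex.conj_im]
  ring

section Envelope

variable {A B : ℝ} {q₁ q₂ : ℝ → ℂ}

theorem envelope_hasDerivAt_norm_sq_fst (hq₁ : Differentiable ℝ q₁)
    (heq₁ : ∀ T : ℝ, Complex.I * deriv q₁ T = q₁ T + (A : ℂ) * conj (q₁ T) * q₂ T) (T : ℝ) :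
    HasDerivAt (fun s => ‖q₁ s‖ ^ 2) (2 * A * (conj (q₁ T) ^ 2 * q₂ T).im) T := by
  convert (hq₁ T).hasDerivAt.norm_sq_of_I_mul_eq_s8 (heq₁ T) using 1
  rw [show conj (q₁ T) * (A * conj (q₁ T) * q₂ T) = A * (conj (q₁ T) ^ 2 * q₂ T) by ring,
    Complex.im_ofReal_mul]
  ring

theorem envelope_hasDerivAt_norm_sq_snd (hq₂ : Differentiable ℝ q₂)
    (heq₂ : ∀ T : ℝ, Complex.I * deriv q₂ T = q₂ T + (B : ℂ) * q₁ T ^ 2) (T : ℝ) :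
    HasDerivAt (fun s => ‖q₂ s‖ ^ 2) (-(2 * B * (conj (q₁ T) ^ 2 * q₂ T).im)) T := by
  convert (hq₂ T).hasDerivAt.norm_sq_of_I_mul_eq_s8 (heq₂ T) using 1
  rw [show conj (q₂ T) * (B * q₁ T ^ 2) = B * conj (conj (q₁ T) ^ 2 * q₂ T) by simp; ring,
    Complex.im_ofReal_mul, Complex.conj_im]
  ring

end Envelope

/-- Along every solution of the envelope system with `Ã + B̃ ≠ 0`, the quantities
`P = |q₁|² + |q₂|²` and `Δ = |q₁|² − |q₂|²` satisfy `P′ = ((Ã−B̃)/(Ã+B̃)) Δ′`;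
equivalently `C = P − ((Ã−B̃)/(Ã+B̃)) Δ` is a constant of motion. -/
theorem envelope_P_Delta_relation
    (A B : ℝ) (hAB : A + B ≠ 0) (q₁ q₂ : ℝ → ℂ)
    (hq₁ : Differentiable ℝ q₁) (hq₂ : Differentiable ℝ q₂)
    (heq₁ : ∀ T : ℝ, Complex.I * deriv q₁ T =
      q₁ T + (A : ℂ) * (starRingEnd ℂ) (q₁ T) * q₂ T)
    (heq₂ : ∀ T : ℝ, Complex.I * deriv q₂ T = q₂ T + (B : ℂ) * (q₁ T) ^ 2) :
    let P : ℝ → ℝ := fun T => ‖q₁ T‖ ^ 2 + ‖q₂ T‖ ^ 2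
    let Δ : ℝ → ℝ := fun T => ‖q₁ T‖ ^ 2 - ‖q₂ T‖ ^ 2
    (∀ T : ℝ, deriv P T = ((A - B) / (A + B)) * deriv Δ T) ∧
      ∀ T S : ℝ, P T - ((A - B) / (A + B)) * Δ T = P S - ((A - B) / (A + B)) * Δ S := by
  intro P Δ
  have h₁ := envelope_hasDerivAt_norm_sq_fst hq₁ heq₁
  have h₂ := envelope_hasDerivAt_norm_sq_snd hq₂ heq₂
  have hP (T : ℝ) : HasDerivAt P _ T := (h₁ T).add (h₂ T)
  have hΔ (T : ℝ) : HasDerivAt Δ _ T := (h₁ T).sub (h₂ T)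
  have hrel (T : ℝ) : deriv P T = ((A - B) / (A + B)) * deriv Δ T := by
    rw [(hP T).deriv, (hΔ T).deriv]
    field_simp
    ring
  have hC (T : ℝ) : HasDerivAt (fun T => P T - ((A - B) / (A + B)) * Δ T) _ T :=
    (hP T).sub ((hΔ T).const_mul _)
  refine ⟨hrel, fun T S => is_const_of_deriv_eq_zero (fun t => (hC t).differentiableAt)
    (fun t => ?_) T S⟩
  rw [(hC t).deriv, ← (hP t).deriv, ← (hΔ t).deriv, hrel t, sub_self]
end

section
/- If Ã > 0 and B̃ > 0, then every solution of the envelope system is bounded for all time: |q₁(T)|² ≤ |q₁(0)|² + (Ã/B̃)|q₂(0)|² and |q₂(T)|² ≤ (B̃/Ã)|q₁(0)|² + |q₂(0)|² for all T. -/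
/-!
The weighted energy `B̃ |q₁|² + Ã |q₂|²` is conserved: the linear terms rotate each mode without
changing its modulus, and the two cubic exchange terms cancel after weighting by `B̃` and `Ã`.
For `Ã, B̃ > 0` both summands are nonnegative, so each is bounded by the initial energy.
-/

open Complex

lemma Complex.eq_neg_I_mul_of_I_mul_eq {z w : ℂ} (h : I * z = w) : z = -I * w := by
  rw [← h, ← mul_assoc, neg_mul, I_mul_I, neg_neg, one_mul]

/-- After weighting, the cubic terms add up to `-I * 2 Re (conj z₁ ^ 2 * z₂)`, whose real part
vanishes. -/
lemma envelope_energy_flux_eq_zero (A B : ℝ) (z₁ z₂ : ℂ) :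
    B * inner ℝ z₁ (-I * (z₁ + A * (starRingEnd ℂ) z₁ * z₂))
      + A * inner ℝ z₂ (-I * (z₂ + B * z₁ ^ 2)) = 0 := by
  simp only [Complex.inner, mul_re, mul_im, add_re, add_im, neg_re, neg_im, I_re, I_im,
    conj_re, conj_im, ofReal_re, ofReal_im, pow_two]
  ring

noncomputable def envelopeEnergy (A B : ℝ) (q₁ q₂ : ℝ → ℂ) (T : ℝ) : ℝ :=
  B * ‖q₁ T‖ ^ 2 + A * ‖q₂ T‖ ^ 2

section Conservation

variable {A B : ℝ} {q₁ q₂ : ℝ → ℂ}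
  (hq₁ : Differentiable ℝ q₁) (hq₂ : Differentiable ℝ q₂)
  (heq₁ : ∀ T : ℝ, I * deriv q₁ T = q₁ T + (A : ℂ) * (starRingEnd ℂ) (q₁ T) * q₂ T)
  (heq₂ : ∀ T : ℝ, I * deriv q₂ T = q₂ T + (B : ℂ) * (q₁ T) ^ 2)
include hq₁ hq₂ heq₁ heq₂

lemma hasDerivAt_envelopeEnergy (T : ℝ) : HasDerivAt (envelopeEnergy A B q₁ q₂) 0 T := by
  have h₁ := (hq₁ T).hasDerivAt.norm_sq.const_mul B
  have h₂ := (hq₂ T).hasDerivAt.norm_sq.const_mul A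
  refine (h₁.add h₂).congr_deriv ?_
  rw [eq_neg_I_mul_of_I_mul_eq (heq₁ T), eq_neg_I_mul_of_I_mul_eq (heq₂ T),
    mul_left_comm B, mul_left_comm A, ← mul_add, envelope_energy_flux_eq_zero, mul_zero]

lemma envelopeEnergy_eq (T : ℝ) : envelopeEnergy A B q₁ q₂ T = envelopeEnergy A B q₁ q₂ 0 :=
  is_const_of_deriv_eq_zero
    (fun t => (hasDerivAt_envelopeEnergy hq₁ hq₂ heq₁ heq₂ t).differentiableAt)
    (fun t => (hasDerivAt_envelopeEnergy hq₁ hq₂ heq₁ heq₂ t).deriv) T 0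

end Conservation

lemma le_add_div_mul_of_mul_add_mul_eq {A B x y x₀ y₀ : ℝ} (hA : 0 ≤ A) (hB : 0 < B)
    (hy : 0 ≤ y) (h : B * x + A * y = B * x₀ + A * y₀) : x ≤ x₀ + A / B * y₀ := by
  have hscale : B * (x₀ + A / B * y₀) = B * x₀ + A * y₀ := by field_simp
  refine le_of_mul_le_mul_left ?_ hB
  rw [hscale, ← h]
  linarith [mul_nonneg hA hy]

/-- If `Ã > 0` and `B̃ > 0`, every solution of the envelope system is bounded:
`|q₁(T)|² ≤ |q₁(0)|² + (Ã/B̃)|q₂(0)|²` and `|q₂(T)|² ≤ (B̃/Ã)|q₁(0)|² + |q₂(0)|²`. -/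
theorem envelope_bounded_solutions
    (A B : ℝ) (hA : 0 < A) (hB : 0 < B) (q₁ q₂ : ℝ → ℂ)
    (hq₁ : Differentiable ℝ q₁) (hq₂ : Differentiable ℝ q₂)
    (heq₁ : ∀ T : ℝ, Complex.I * deriv q₁ T =
      q₁ T + (A : ℂ) * (starRingEnd ℂ) (q₁ T) * q₂ T)
    (heq₂ : ∀ T : ℝ, Complex.I * deriv q₂ T = q₂ T + (B : ℂ) * (q₁ T) ^ 2) :
    ∀ T : ℝ,
      ‖q₁ T‖ ^ 2 ≤ ‖q₁ 0‖ ^ 2 + (A / B) * ‖q₂ 0‖ ^ 2 ∧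
      ‖q₂ T‖ ^ 2 ≤ (B / A) * ‖q₁ 0‖ ^ 2 + ‖q₂ 0‖ ^ 2 := by
  intro T
  have hE := envelopeEnergy_eq hq₁ hq₂ heq₁ heq₂ T
  simp only [envelopeEnergy] at hE
  refine ⟨le_add_div_mul_of_mul_add_mul_eq hA.le hB (by positivity) hE, ?_⟩
  rw [add_comm (B / A * _)]
  exact le_add_div_mul_of_mul_add_mul_eq hB.le hA (by positivity)
    ((add_comm _ _).trans (hE.trans (add_comm _ _)))
end

section
/- The values Δ_j given by Δ_j = (Ã+B̃)·(6Ã²C − 3ÃB̃C − (−1)^j √(1 + 6Ã(Ã+B̃)C) − 1) / (18Ã²B̃), j ∈ {1,2}, solve the equilibrium equation of the reduced system: if Ã ≠ 0, B̃ ≠ 0, Ã + B̃ ≠ 0 and 1 + 6Ã(Ã+B̃)C ≥ 0, then with P_j = C + ((Ã−B̃)/(Ã+B̃)) Δ_j one has ( 2Ã(Δ_j − P_j) + B̃(Δ_j + P_j) )² = 2(P_j − Δ_j). -/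
/-! Put `u = (-1)^j √(1 + 6Ã(Ã+B̃)C)`, so that `u² = 1 + 6Ã(Ã+B̃)C`. Substituting `Δ` and `P`,
the bracket `2Ã(Δ−P) + B̃(Δ+P)` equals `−(u+1)/(3Ã)` and `P − Δ` equals
`(1 + 3Ã(Ã+B̃)C + u)/(9Ã²) = (u+1)²/(18Ã²)`, which is the equation. -/

section Equilibrium

variable {A B C u : ℝ}

theorem equilibrium_bracket_eq (hA : A ≠ 0) (hB : B ≠ 0) (hAB : A + B ≠ 0) (Δ : ℝ)
    (hΔ : Δ = (A + B) * (6 * A ^ 2 * C - 3 * A * B * C - u - 1) / (18 * A ^ 2 * B)) :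
    2 * A * (Δ - (C + (A - B) / (A + B) * Δ)) + B * (Δ + (C + (A - B) / (A + B) * Δ))
      = -(u + 1) / (3 * A) := by
  subst hΔ
  field_simp
  ring

theorem equilibrium_sub_eq (hA : A ≠ 0) (hB : B ≠ 0) (hAB : A + B ≠ 0) (Δ : ℝ)
    (hΔ : Δ = (A + B) * (6 * A ^ 2 * C - 3 * A * B * C - u - 1) / (18 * A ^ 2 * B))
    (hu : u ^ 2 = 1 + 6 * A * (A + B) * C) :
    C + (A - B) / (A + B) * Δ - Δ = (u + 1) ^ 2 / (18 * A ^ 2) := by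
  subst hΔ
  field_simp
  linear_combination (-B) * hu

theorem equilibrium_eq_of_sq_eq (hA : A ≠ 0) (hB : B ≠ 0) (hAB : A + B ≠ 0)
    (hu : u ^ 2 = 1 + 6 * A * (A + B) * C) :
    let Δ : ℝ := (A + B) * (6 * A ^ 2 * C - 3 * A * B * C - u - 1) / (18 * A ^ 2 * B)
    let P : ℝ := C + ((A - B) / (A + B)) * Δ
    (2 * A * (Δ - P) + B * (Δ + P)) ^ 2 = 2 * (P - Δ) := by
  intro Δ P
  rw [equilibrium_bracket_eq hA hB hAB Δ rfl, equilibrium_sub_eq hA hB hAB Δ rfl hu]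
  field_simp
  ring

end Equilibrium

theorem reduced_system_equilibria_general
    (A B C : ℝ) (hA : A ≠ 0) (hB : B ≠ 0) (hAB : A + B ≠ 0)
    (hs : 0 ≤ 1 + 6 * A * (A + B) * C)
    (j : ℕ) :
    let Δ : ℝ := (A + B) *
      (6 * A ^ 2 * C - 3 * A * B * C
        - (-1 : ℝ) ^ j * Real.sqrt (1 + 6 * A * (A + B) * C) - 1) / (18 * A ^ 2 * B)
    let P : ℝ := C + ((A - B) / (A + B)) * Δ
    (2 * A * (Δ - P) + B * (Δ + P)) ^ 2 = 2 * (P - Δ) := by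
  refine equilibrium_eq_of_sq_eq hA hB hAB ?_
  rw [mul_pow, ← pow_mul, mul_comm j, pow_mul, neg_one_sq, one_pow, one_mul, Real.sq_sqrt hs]

/-- The values `Δ_j = (Ã+B̃)(6Ã²C − 3ÃB̃C − (−1)^j √(1+6Ã(Ã+B̃)C) − 1)/(18Ã²B̃)`,
`j ∈ {1,2}`, solve the equilibrium equation
`(2Ã(Δ−P) + B̃(Δ+P))² = 2(P−Δ)` of the reduced system, where
`P = C + ((Ã−B̃)/(Ã+B̃))Δ`. -/
theorem reduced_system_equilibria
    (A B C : ℝ) (hA : A ≠ 0) (hB : B ≠ 0) (hAB : A + B ≠ 0)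
    (hs : 0 ≤ 1 + 6 * A * (A + B) * C)
    (j : ℕ) (hj : j = 1 ∨ j = 2) :
    let Δ : ℝ := (A + B) *
      (6 * A ^ 2 * C - 3 * A * B * C
        - (-1 : ℝ) ^ j * Real.sqrt (1 + 6 * A * (A + B) * C) - 1) / (18 * A ^ 2 * B)
    let P : ℝ := C + ((A - B) / (A + B)) * Δ
    (2 * A * (Δ - P) + B * (Δ + P)) ^ 2 = 2 * (P - Δ) :=
  reduced_system_equilibria_general A B C hA hB hAB hs j
end

section
/- At an equilibrium point (Δ_j, θ_j) of the reduced system (with sin(2θ_j) = 0, cos(2θ_j) = c_j ∈ {−1, 1}, P_j − Δ_j > 0, and c_j(2Ã(Δ_j − P_j) + B̃(Δ_j + P_j)) = √(2(P_j − Δ_j))), the Jacobian matrix of the reduced vector field has eigenvalues ± λ_j, where λ_j² = ( −3 − 18Ã(Ã+B̃)C + 6(−1)^j √(1 + 6Ã(Ã+B̃)C) ) / 9, provided Ã ≠ 0, B̃ ≠ 0, Ã + B̃ ≠ 0 and 1 + 6Ã(Ã+B̃)C > 0; here Δ_j = (Ã+B̃)·(6Ã²C − 3ÃB̃C − (−1)^j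 √(1 + 6Ã(Ã+B̃)C) − 1) / (18Ã²B̃) and P_j = C + ((Ã−B̃)/(Ã+B̃)) Δ_j. -/
/-!
On `sin 2θ = 0` the field `Δ′` vanishes identically in `Δ`, and `∂θ′/∂θ` carries a factor
`sin 2θ`, so the Jacobian is antidiagonal: its trace is `0` and its eigenvalues are `±√(-det)`.
At an equilibrium the numerator of `θ′` vanishes, so `∂θ′/∂Δ` is just the derivative of that
numerator over `2√(2(P - Δ))`; with `cos² 2θ = 1` this gives `det = B̃(P + Δ)(3ÃK + 1)/K`, where
`K = 2Ã(Δ - P) + B̃(Δ + P)`. At `Δ_j`, writing `σ = (-1)^j` and `S = √(1 + 6Ã(Ã+B̃)C)`, one has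
`K = -(1 + σS)/(3Ã)` and `P + Δ = (S² - σS - 2)/(9ÃB̃) = (S - 2σ)(S + σ)/(9ÃB̃)`, and the factor
`S + σ = σ(1 + σS)` cancels, leaving `det = S(S - 2σ)/3`.
-/

open Real

noncomputable section

namespace ReducedSystem

variable (A B C : ℝ)

def P (Δ : ℝ) : ℝ := C + ((A - B) / (A + B)) * Δ

def deltaDot (Δ θ : ℝ) : ℝ :=
  (A + B) * sin (2 * θ) * (P A B C Δ + Δ) * √(2 * (P A B C Δ - Δ)) / 2

def thetaDot (Δ θ : ℝ) : ℝ :=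
  -(2 * A * cos (2 * θ) * (Δ - P A B C Δ) + B * cos (2 * θ) * (Δ + P A B C Δ)
      - √(2 * (P A B C Δ - Δ))) / (2 * √(2 * (P A B C Δ - Δ)))

def cosCoeff (Δ : ℝ) : ℝ := 2 * A * (Δ - P A B C Δ) + B * (Δ + P A B C Δ)

/-- `equilibriumDelta A B C ((-1) ^ j)` is `Δ_j`. -/
def equilibriumDelta (σ : ℝ) : ℝ :=
  (A + B) * (6 * A ^ 2 * C - 3 * A * B * C - σ * √(1 + 6 * A * (A + B) * C) - 1) / (18 * A ^ 2 * B)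

def jacobian (Δ θ : ℝ) : Matrix (Fin 2) (Fin 2) ℝ :=
  !![deriv (fun Δ => deltaDot A B C Δ θ) Δ, deriv (fun θ => deltaDot A B C Δ θ) θ;
     deriv (fun Δ => thetaDot A B C Δ θ) Δ, deriv (fun θ => thetaDot A B C Δ θ) θ]

variable {A B C}

lemma thetaDot_eq (Δ θ : ℝ) :
    thetaDot A B C Δ θ
      = -(cos (2 * θ) * cosCoeff A B C Δ - √(2 * (P A B C Δ - Δ)))
          / (2 * √(2 * (P A B C Δ - Δ))) := by
  unfold thetaDot cosCoeff; ring

lemma hasDerivAt_P (Δ : ℝ) : HasDerivAt (P A B C) ((A - B) / (A + B)) Δ :=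
  (hasDerivAt_const_mul _).const_add C

lemma hasDerivAt_cosCoeff (hAB : A + B ≠ 0) (Δ : ℝ) :
    HasDerivAt (cosCoeff A B C) (6 * A * B / (A + B)) Δ := by
  refine ((((hasDerivAt_id' Δ).sub (hasDerivAt_P Δ)).const_mul (2 * A)).add
    (((hasDerivAt_id' Δ).add (hasDerivAt_P Δ)).const_mul B)).congr_deriv ?_
  field_simp
  ring

lemma hasDerivAt_sqrt_two_mul_P_sub_self (hAB : A + B ≠ 0) {Δ : ℝ} (hpos : 0 < P A B C Δ - Δ) :
    HasDerivAt (fun Δ => √(2 * (P A B C Δ - Δ)))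
      (-2 * B / ((A + B) * √(2 * (P A B C Δ - Δ)))) Δ := by
  have hs : 0 < √(2 * (P A B C Δ - Δ)) := by positivity
  have hradicand : HasDerivAt (fun Δ => 2 * (P A B C Δ - Δ)) (2 * ((A - B) / (A + B) - 1)) Δ :=
    ((hasDerivAt_P Δ).sub (hasDerivAt_id' Δ)).const_mul 2
  refine (hradicand.sqrt (by positivity)).congr_deriv ?_
  field_simp
  ring

lemma deltaDot_of_sin_eq_zero {θ : ℝ} (hsin : sin (2 * θ) = 0) (Δ : ℝ) :
    deltaDot A B C Δ θ = 0 := by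
  simp [deltaDot, hsin]

lemma hasDerivAt_deltaDot_theta (Δ θ : ℝ) :
    HasDerivAt (fun θ => deltaDot A B C Δ θ)
      ((A + B) * cos (2 * θ) * (P A B C Δ + Δ) * √(2 * (P A B C Δ - Δ))) θ := by
  refine (((((hasDerivAt_const_mul 2).sin).const_mul (A + B)).mul_const
    (P A B C Δ + Δ)).mul_const (√(2 * (P A B C Δ - Δ))) |>.div_const 2).congr_deriv ?_
  ring

lemma hasDerivAt_thetaDot_theta (Δ θ : ℝ) :
    HasDerivAt (fun θ => thetaDot A B C Δ θ)
      (sin (2 * θ) * cosCoeff A B C Δ / √(2 * (P A B C Δ - Δ))) θ := by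
  simp_rw [thetaDot_eq]
  refine ((((hasDerivAt_const_mul 2).cos).mul_const (cosCoeff A B C Δ)).sub_const
    (√(2 * (P A B C Δ - Δ)))).neg.div_const (2 * √(2 * (P A B C Δ - Δ))) |>.congr_deriv ?_
  ring

/-- At an equilibrium the numerator of `thetaDot` vanishes, so the quotient rule reduces to
differentiating the numerator. -/
lemma hasDerivAt_thetaDot_delta (hAB : A + B ≠ 0) {Δ θ : ℝ} (hpos : 0 < P A B C Δ - Δ)
    (heq : cos (2 * θ) * cosCoeff A B C Δ = √(2 * (P A B C Δ - Δ))) :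
    HasDerivAt (fun Δ => thetaDot A B C Δ θ)
      (-(3 * A * B * cos (2 * θ) * √(2 * (P A B C Δ - Δ)) + B)
        / ((A + B) * √(2 * (P A B C Δ - Δ)) ^ 2)) Δ := by
  have hs : 0 < √(2 * (P A B C Δ - Δ)) := by positivity
  have hsqrt := hasDerivAt_sqrt_two_mul_P_sub_self hAB hpos
  simp_rw [thetaDot_eq]
  refine ((((hasDerivAt_cosCoeff (C := C) hAB Δ).const_mul (cos (2 * θ))).sub hsqrt).neg.div
    (hsqrt.const_mul 2) (by positivity)).congr_deriv ?_
  simp only [Pi.neg_apply, Pi.sub_apply]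
  rw [heq]
  field_simp
  ring

lemma trace_jacobian_of_sin_eq_zero {Δ θ : ℝ} (hsin : sin (2 * θ) = 0) :
    (jacobian A B C Δ θ).trace = 0 := by
  simp [jacobian, Matrix.trace_fin_two_of, deltaDot_of_sin_eq_zero hsin,
    (hasDerivAt_thetaDot_theta Δ θ).deriv, hsin]

lemma cosCoeff_ne_zero {Δ θ : ℝ} (hpos : 0 < P A B C Δ - Δ)
    (heq : cos (2 * θ) * cosCoeff A B C Δ = √(2 * (P A B C Δ - Δ))) :
    cosCoeff A B C Δ ≠ 0 := by
  have hs : 0 < √(2 * (P A B C Δ - Δ)) := by positivity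
  rintro hK
  rw [hK, mul_zero] at heq
  linarith

lemma det_jacobian_of_equilibrium (hAB : A + B ≠ 0) {Δ θ : ℝ} (hpos : 0 < P A B C Δ - Δ)
    (hsin : sin (2 * θ) = 0)
    (heq : cos (2 * θ) * cosCoeff A B C Δ = √(2 * (P A B C Δ - Δ))) :
    (jacobian A B C Δ θ).det
      = B * (P A B C Δ + Δ) * (3 * A * cosCoeff A B C Δ + 1) / cosCoeff A B C Δ := by
  have hcos : cos (2 * θ) ^ 2 = 1 := by nlinarith [sin_sq_add_cos_sq (2 * θ)]
  have hc0 : cos (2 * θ) ≠ 0 := by rintro hc; simp [hc] at hcos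
  have hK := cosCoeff_ne_zero hpos heq
  simp only [jacobian, Matrix.det_fin_two_of, deltaDot_of_sin_eq_zero hsin, deriv_const',
    (hasDerivAt_deltaDot_theta Δ θ).deriv, (hasDerivAt_thetaDot_delta hAB hpos heq).deriv]
  rw [← heq]
  field_simp
  rw [hcos]
  ring

lemma cosCoeff_equilibriumDelta (hA : A ≠ 0) (hB : B ≠ 0) (hAB : A + B ≠ 0) (σ : ℝ) :
    cosCoeff A B C (equilibriumDelta A B C σ)
      = -(1 + σ * √(1 + 6 * A * (A + B) * C)) / (3 * A) := by
  unfold cosCoeff P equilibriumDelta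
  field_simp
  ring

lemma P_add_equilibriumDelta (hA : A ≠ 0) (hB : B ≠ 0) (hAB : A + B ≠ 0) (σ : ℝ) :
    P A B C (equilibriumDelta A B C σ) + equilibriumDelta A B C σ
      = (6 * A * (A + B) * C - σ * √(1 + 6 * A * (A + B) * C) - 1) / (9 * A * B) := by
  unfold P equilibriumDelta
  field_simp
  ring

end ReducedSystem

end

open ReducedSystem

theorem reduced_system_jacobian_eigenvalues_general
    (A B C : ℝ) (hA : A ≠ 0) (hB : B ≠ 0) (hAB : A + B ≠ 0)
    (hs : 0 < 1 + 6 * A * (A + B) * C)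
    (j : ℕ) (c θj : ℝ) :
    let P : ℝ → ℝ := fun Δ => C + ((A - B) / (A + B)) * Δ
    let f : ℝ → ℝ → ℝ := fun Δ θ =>
      (A + B) * Real.sin (2 * θ) * (P Δ + Δ) * Real.sqrt (2 * (P Δ - Δ)) / 2
    let g : ℝ → ℝ → ℝ := fun Δ θ =>
      -(2 * A * Real.cos (2 * θ) * (Δ - P Δ) + B * Real.cos (2 * θ) * (Δ + P Δ)
          - Real.sqrt (2 * (P Δ - Δ))) / (2 * Real.sqrt (2 * (P Δ - Δ)))
    let Δj : ℝ := (A + B) *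
      (6 * A ^ 2 * C - 3 * A * B * C
        - (-1 : ℝ) ^ j * Real.sqrt (1 + 6 * A * (A + B) * C) - 1) / (18 * A ^ 2 * B)
    let J : Matrix (Fin 2) (Fin 2) ℝ :=
      !![deriv (fun Δ => f Δ θj) Δj, deriv (fun θ => f Δj θ) θj;
         deriv (fun Δ => g Δ θj) Δj, deriv (fun θ => g Δj θ) θj]
    Real.sin (2 * θj) = 0 →
    Real.cos (2 * θj) = c →
    0 < P Δj - Δj →
    c * (2 * A * (Δj - P Δj) + B * (Δj + P Δj)) = Real.sqrt (2 * (P Δj - Δj)) →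
    J.trace = 0 ∧
      J.det = -((-3 - 18 * A * (A + B) * C
        + 6 * (-1 : ℝ) ^ j * Real.sqrt (1 + 6 * A * (A + B) * C)) / 9) := by
  intro P f g Δj J hsin hcos hpos heq
  set σ : ℝ := (-1) ^ j with hσ_def
  set S := √(1 + 6 * A * (A + B) * C)
  have hσ : σ ^ 2 = 1 := by rw [hσ_def, ← pow_mul, mul_comm, pow_mul]; norm_num
  have hS : S ^ 2 = 1 + 6 * A * (A + B) * C := sq_sqrt hs.le
  have heq' : cos (2 * θj) * cosCoeff A B C Δj = √(2 * (P Δj - Δj)) := hcos ▸ heq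
  have hK : cosCoeff A B C Δj = -(1 + σ * S) / (3 * A) :=
    cosCoeff_equilibriumDelta hA hB hAB σ
  have hv : ReducedSystem.P A B C Δj + Δj = (6 * A * (A + B) * C - σ * S - 1) / (9 * A * B) :=
    P_add_equilibriumDelta hA hB hAB σ
  have hK0 : 1 + σ * S ≠ 0 := fun h => cosCoeff_ne_zero hpos heq' (by rw [hK, h]; ring)
  refine ⟨trace_jacobian_of_sin_eq_zero hsin,
    (det_jacobian_of_equilibrium hAB hpos hsin heq').trans ?_⟩
  rw [hK, hv]
  clear_value σ S
  field_simp
  linear_combination 3 * S ^ 2 * hσ + 3 * hS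

/-- At an equilibrium point `(Δ_j, θ_j)` of the reduced system, the Jacobian matrix
of the reduced vector field has eigenvalues `±λ_j` with
`λ_j² = (−3 − 18Ã(Ã+B̃)C + 6(−1)^j √(1+6Ã(Ã+B̃)C))/9`; equivalently, the Jacobian
has zero trace and determinant `−λ_j²`. -/
theorem reduced_system_jacobian_eigenvalues
    (A B C : ℝ) (hA : A ≠ 0) (hB : B ≠ 0) (hAB : A + B ≠ 0)
    (hs : 0 < 1 + 6 * A * (A + B) * C)
    (j : ℕ) (hj : j = 1 ∨ j = 2) (c θj : ℝ) (hc : c = 1 ∨ c = -1) :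
    let P : ℝ → ℝ := fun Δ => C + ((A - B) / (A + B)) * Δ
    let f : ℝ → ℝ → ℝ := fun Δ θ =>
      (A + B) * Real.sin (2 * θ) * (P Δ + Δ) * Real.sqrt (2 * (P Δ - Δ)) / 2
    let g : ℝ → ℝ → ℝ := fun Δ θ =>
      -(2 * A * Real.cos (2 * θ) * (Δ - P Δ) + B * Real.cos (2 * θ) * (Δ + P Δ)
          - Real.sqrt (2 * (P Δ - Δ))) / (2 * Real.sqrt (2 * (P Δ - Δ)))
    let Δj : ℝ := (A + B) *
      (6 * A ^ 2 * C - 3 * A * B * C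
        - (-1 : ℝ) ^ j * Real.sqrt (1 + 6 * A * (A + B) * C) - 1) / (18 * A ^ 2 * B)
    let J : Matrix (Fin 2) (Fin 2) ℝ :=
      !![deriv (fun Δ => f Δ θj) Δj, deriv (fun θ => f Δj θ) θj;
         deriv (fun Δ => g Δ θj) Δj, deriv (fun θ => g Δj θ) θj]
    Real.sin (2 * θj) = 0 →
    Real.cos (2 * θj) = c →
    0 < P Δj - Δj →
    c * (2 * A * (Δj - P Δj) + B * (Δj + P Δj)) = Real.sqrt (2 * (P Δj - Δj)) →
    J.trace = 0 ∧
      J.det = -((-3 - 18 * A * (A + B) * C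
        + 6 * (-1 : ℝ) ^ j * Real.sqrt (1 + 6 * A * (A + B) * C)) / 9) :=
  reduced_system_jacobian_eigenvalues_general A B C hA hB hAB hs j c θj
end

section
/- Stability classification of the equilibria of the reduced system via the eigenvalue formula: let s = 1 + 6Ã(Ã+B̃)C and λ_j² = (−3 − 18Ã(Ã+B̃)C + 6(−1)^j √s)/9 for j ∈ {1,2}. If s > 0 then λ_1² < 0 (so the eigenvalues ±λ_1 are purely imaginary and the first equilibrium is a centre), while λ_2² > 0 if and only if 0 < s < 4 (a saddle). Moreover, when C = 2B̃r₁²/(Ã+B̃) (the value corresponding to initial data q₂(0) = 0, |q₁(0)| = r₁), one has s = 1 + 12ÃB̃r₁², and the conditions s > 0 and s < 4 are equivalent to 1 + 12ÃB̃r₁² > 0 and 1 − 4ÃB̃r₁² > 0 respectively. -/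
/-- Stability classification of the equilibria of the reduced system via the
eigenvalue formula: with `s = 1 + 6Ã(Ã+B̃)C` and
`λ_j² = (−3 − 18Ã(Ã+B̃)C + 6(−1)^j √s)/9`, if `s > 0` then `λ₁² < 0` (a centre),
while (for `s ≥ 0`) `λ₂² > 0` iff `0 < s < 4` (a saddle). Moreover, when
`C = 2B̃r₁²/(Ã+B̃)`, one has `s = 1 + 12ÃB̃r₁²`, and `s > 0`, `s < 4` are
equivalent to `1 + 12ÃB̃r₁² > 0` and `1 − 4ÃB̃r₁² > 0` respectively. -/
theorem reduced_system_stability_classification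
    (A B C r₁ : ℝ) (hAB : A + B ≠ 0) :
    let s : ℝ := 1 + 6 * A * (A + B) * C
    let lam1sq : ℝ := (-3 - 18 * A * (A + B) * C - 6 * Real.sqrt s) / 9
    let lam2sq : ℝ := (-3 - 18 * A * (A + B) * C + 6 * Real.sqrt s) / 9
    (0 < s → lam1sq < 0) ∧
    (0 ≤ s → (0 < lam2sq ↔ 0 < s ∧ s < 4)) ∧
    (C = 2 * B * r₁ ^ 2 / (A + B) →
      s = 1 + 12 * A * B * r₁ ^ 2 ∧
      (0 < s ↔ 0 < 1 + 12 * A * B * r₁ ^ 2) ∧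
      (s < 4 ↔ 0 < 1 - 4 * A * B * r₁ ^ 2)) := by
  intro s lam1sq lam2sq
  have h1 : lam1sq = (-3 * s - 6 * Real.sqrt s) / 9 := by
    simp only [lam1sq, s]; ring
  have h2 : lam2sq = (-3 * s + 6 * Real.sqrt s) / 9 := by
    simp only [lam2sq, s]; ring
  have h3 : C = 2 * B * r₁ ^ 2 / (A + B) → s = 1 + 12 * A * B * r₁ ^ 2 := by
    intro hC
    simp only [s, hC]
    field_simp
    ring
  clear_value lam1sq lam2sq s
  refine ⟨?_, ?_, ?_⟩
  · intro hs
    have hsq := Real.sqrt_pos.mpr hs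
    rw [h1]; nlinarith
  · intro hs
    have hsq := Real.sq_sqrt hs
    have hnn := Real.sqrt_nonneg s
    rw [h2]
    constructor
    · intro h
      constructor
      · nlinarith
      · nlinarith [sq_nonneg (Real.sqrt s - 2)]
    · rintro ⟨hpos, hlt⟩
      have hsp := Real.sqrt_pos.mpr hpos
      have : Real.sqrt s < 2 := by nlinarith
      nlinarith
  · intro hC
    have hs := h3 hC
    exact ⟨hs, by rw [hs], by rw [hs]; constructor <;> intro h <;> linarith⟩
end
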